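/- arXiv:1001.5183 — 3 statements merged into one kernel-verified Lean document; each statement's English description precedes it below -/
import Mathlib

section
/- Let G be an energy parity game, and for each state q from which player 1 wins let v(q) ∈ ℕ be the minimum initial credit in q. Let σ be an optimal strategy for player 1 in a winning state q₀ (i.e., σ is winning from q₀ with initial credit v(q₀)). Then for every Δ ≥ 0, every outcome ρ of σ from q₀, and every position n of ρ, the state q = ρₙ is a winning state and the energy level v(q₀) + Δ + EL(w,ρ(n)) at that position is at least v(q) + Δ. -/
/-!
After the prefix `ρ(n)`, playing `σ` with the history `ρ(n)` prepended is a strategy from `ρₙ`.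
Each of its outcomes, spliced after `ρ(n)`, is an outcome of `σ` from `q₀`; it therefore satisfies
the parity condition (a suffix condition) and keeps the energy of `v(q₀) + EL(w, ρ(n))` nonnegative.
So `ρₙ` is winning with initial credit `v(q₀) + EL(w, ρ(n))`, which is at least `v(ρₙ)` by minimality;
adding `Δ` to both sides gives the claim.
-/

variable {Q : Type*}

def IsPlay (E : Q → Q → Prop) (ρ : ℕ → Q) : Prop :=
  ∀ i, E (ρ i) (ρ (i + 1))

def EL (w : Q → Q → ℤ) (ρ : ℕ → Q) (n : ℕ) : ℤ :=
  ∑ i ∈ Finset.range n, w (ρ i) (ρ (i + 1))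

def EnergyCond (w : Q → Q → ℤ) (c₀ : ℕ) (ρ : ℕ → Q) : Prop :=
  ∀ n, 0 ≤ (c₀ : ℤ) + EL w ρ n

def InfOften (ρ : ℕ → Q) (q : Q) : Prop :=
  ∀ N, ∃ n, N ≤ n ∧ ρ n = q

def ParityCond (p : Q → ℕ) (ρ : ℕ → Q) : Prop :=
  ∃ q, InfOften ρ q ∧ Even (p q) ∧ ∀ q', InfOften ρ q' → p q ≤ p q'

/-- The history `ρ 0, …, ρ (i-1)` as a list. -/
def Hist (ρ : ℕ → Q) (i : ℕ) : List Q :=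
  (List.range i).map ρ

/-- A strategy reads the history strictly before the current state, then the current state. -/
def IsStrategy (Q1 : Set Q) (E : Q → Q → Prop) (σ : List Q → Q → Q) : Prop :=
  ∀ h q, q ∈ Q1 → E q (σ h q)

def IsOutcome (Q1 : Set Q) (E : Q → Q → Prop) (σ : List Q → Q → Q) (q₀ : Q)
    (ρ : ℕ → Q) : Prop :=
  ρ 0 = q₀ ∧ IsPlay E ρ ∧ ∀ i, ρ i ∈ Q1 → ρ (i + 1) = σ (Hist ρ i) (ρ i)

def Player1Wins (Q1 : Set Q) (E : Q → Q → Prop) (p : Q → ℕ) (w : Q → Q → ℤ)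
    (q₀ : Q) : Prop :=
  ∃ σ c₀, IsStrategy Q1 E σ ∧
    ∀ ρ, IsOutcome Q1 E σ q₀ ρ → ParityCond p ρ ∧ EnergyCond w c₀ ρ

def splice (ρ : ℕ → Q) (n : ℕ) (ρ' : ℕ → Q) : ℕ → Q :=
  fun k => if k < n then ρ k else ρ' (k - n)

lemma splice_add (ρ ρ' : ℕ → Q) (n k : ℕ) : splice ρ n ρ' (n + k) = ρ' k := by
  simp [splice]

lemma splice_shift (ρ ρ' : ℕ → Q) (n : ℕ) : (fun k => splice ρ n ρ' (n + k)) = ρ' :=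
  funext (splice_add ρ ρ' n)

lemma splice_of_le {ρ ρ' : ℕ → Q} {n k : ℕ} (h : ρ' 0 = ρ n) (hk : k ≤ n) :
    splice ρ n ρ' k = ρ k := by
  rcases hk.lt_or_eq with hk | rfl
  · simp [splice, hk]
  · simp [splice, h]

lemma hist_congr {ρ ρ' : ℕ → Q} {n : ℕ} (h : ∀ k < n, ρ k = ρ' k) : Hist ρ n = Hist ρ' n :=
  List.map_congr_left fun k hk => h k (List.mem_range.mp hk)

lemma hist_add (ρ : ℕ → Q) (n m : ℕ) :
    Hist ρ (n + m) = Hist ρ n ++ Hist (fun k => ρ (n + k)) m := by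
  simp [Hist, List.range_add, List.map_map, Function.comp_def]

lemma EL_congr {w : Q → Q → ℤ} {ρ ρ' : ℕ → Q} {n : ℕ} (h : ∀ k ≤ n, ρ k = ρ' k) :
    EL w ρ n = EL w ρ' n :=
  Finset.sum_congr rfl fun k hk => by
    have hk : k < n := Finset.mem_range.mp hk
    rw [h k hk.le, h (k + 1) hk]

lemma EL_add (w : Q → Q → ℤ) (ρ : ℕ → Q) (n m : ℕ) :
    EL w ρ (n + m) = EL w ρ n + EL w (fun k => ρ (n + k)) m := by
  simp [EL, Finset.sum_range_add, add_assoc]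

lemma infOften_shift_iff (ρ : ℕ → Q) (n : ℕ) (q : Q) :
    InfOften (fun k => ρ (n + k)) q ↔ InfOften ρ q := by
  constructor
  · intro h N
    obtain ⟨m, hm, hmq⟩ := h N
    exact ⟨n + m, by omega, hmq⟩
  · intro h N
    obtain ⟨m, hm, hmq⟩ := h (n + N)
    exact ⟨m - n, by omega, show ρ (n + (m - n)) = q by rwa [Nat.add_sub_cancel' (by omega)]⟩

lemma parityCond_shift_iff (p : Q → ℕ) (ρ : ℕ → Q) (n : ℕ) :
    ParityCond p (fun k => ρ (n + k)) ↔ ParityCond p ρ := by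
  simp only [ParityCond, infOften_shift_iff]

def residualStrategy (σ : List Q → Q → Q) (h : List Q) : List Q → Q → Q :=
  fun h' q => σ (h ++ h') q

lemma IsStrategy.residualStrategy {Q1 : Set Q} {E : Q → Q → Prop} {σ : List Q → Q → Q}
    (hσ : IsStrategy Q1 E σ) (h : List Q) : IsStrategy Q1 E (residualStrategy σ h) :=
  fun _ q hq => hσ _ q hq

section Outcomes

variable {Q1 : Set Q} {E : Q → Q → Prop} {σ : List Q → Q → Q} {q₀ : Q} {ρ ρ' : ℕ → Q} {n : ℕ}

lemma IsOutcome.splice (hρ : IsOutcome Q1 E σ q₀ ρ)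
    (hρ' : IsOutcome Q1 E (residualStrategy σ (Hist ρ n)) (ρ n) ρ') :
    IsOutcome Q1 E σ q₀ (splice ρ n ρ') := by
  obtain ⟨h0, hplay, hcons⟩ := hρ
  obtain ⟨h0', hplay', hcons'⟩ := hρ'
  have hpre : ∀ k ≤ n, _root_.splice ρ n ρ' k = ρ k := fun k hk => splice_of_le h0' hk
  refine ⟨(hpre 0 n.zero_le).trans h0, fun i => ?_, fun i hi => ?_⟩
  · rcases lt_or_ge i n with hi | hi
    · rw [hpre i hi.le, hpre (i + 1) hi]
      exact hplay i
    · obtain ⟨j, rfl⟩ := Nat.exists_eq_add_of_le hi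
      rw [add_assoc, splice_add, splice_add]
      exact hplay' j
  · rcases lt_or_ge i n with hin | hin
    · rw [hpre i hin.le] at hi ⊢
      rw [hpre (i + 1) hin, hist_congr fun k hk => hpre k (by omega)]
      exact hcons i hi
    · obtain ⟨j, rfl⟩ := Nat.exists_eq_add_of_le hin
      rw [splice_add] at hi ⊢
      rw [add_assoc, splice_add, hist_add, splice_shift,
        hist_congr fun k hk => hpre k hk.le]
      exact hcons' j hi

lemma IsOutcome.residualStrategy_wins {p : Q → ℕ} {w : Q → Q → ℤ} {c : ℕ}
    (hwin : ∀ ρ, IsOutcome Q1 E σ q₀ ρ → ParityCond p ρ ∧ EnergyCond w c ρ)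
    (hρ : IsOutcome Q1 E σ q₀ ρ) (hρ' : IsOutcome Q1 E (residualStrategy σ (Hist ρ n)) (ρ n) ρ') :
    ParityCond p ρ' ∧ ∀ m, 0 ≤ (c : ℤ) + EL w ρ n + EL w ρ' m := by
  obtain ⟨hpar, hen⟩ := hwin _ (hρ.splice hρ')
  refine ⟨by rwa [← splice_shift ρ ρ' n, parityCond_shift_iff], fun m => ?_⟩
  have hm := hen (n + m)
  rwa [EL_add, splice_shift, EL_congr fun k hk => splice_of_le hρ'.1 hk, ← add_assoc] at hm

end Outcomes

theorem stmt3_general {Q : Type*} (Q1 : Set Q) (E : Q → Q → Prop)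
    (p : Q → ℕ) (w : Q → Q → ℤ)
    (v : Q → ℕ)
    (hv : ∀ q, Player1Wins Q1 E p w q →
      IsLeast {c : ℕ | ∃ σ, IsStrategy Q1 E σ ∧
        ∀ ρ, IsOutcome Q1 E σ q ρ → ParityCond p ρ ∧ EnergyCond w c ρ} (v q))
    (q₀ : Q)
    (σ : List Q → Q → Q) (hσ : IsStrategy Q1 E σ)
    (hopt : ∀ ρ, IsOutcome Q1 E σ q₀ ρ → ParityCond p ρ ∧ EnergyCond w (v q₀) ρ)
    (Δ : ℕ) (ρ : ℕ → Q) (hρ : IsOutcome Q1 E σ q₀ ρ) (n : ℕ) :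
    Player1Wins Q1 E p w (ρ n) ∧
      (v (ρ n) : ℤ) + (Δ : ℤ) ≤ (v q₀ : ℤ) + (Δ : ℤ) + EL w ρ n := by
  set c : ℕ := ((v q₀ : ℤ) + EL w ρ n).toNat
  have hc : (c : ℤ) = v q₀ + EL w ρ n := Int.toNat_of_nonneg ((hopt ρ hρ).2 n)
  have hres : ∀ ρ', IsOutcome Q1 E (residualStrategy σ (Hist ρ n)) (ρ n) ρ' →
      ParityCond p ρ' ∧ EnergyCond w c ρ' := fun ρ' hρ' => by
    obtain ⟨hpar, hen⟩ := hρ.residualStrategy_wins hopt hρ'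
    exact ⟨hpar, fun m => hc ▸ hen m⟩
  have hwin : Player1Wins Q1 E p w (ρ n) := ⟨_, c, hσ.residualStrategy _, hres⟩
  have hle : v (ρ n) ≤ c := (hv _ hwin).2 ⟨_, hσ.residualStrategy _, hres⟩
  exact ⟨hwin, by omega⟩

/-- if `v q` is the minimum initial credit at every winning state `q` and
`σ` is an optimal strategy from the winning state `q₀`, then for every `Δ ≥ 0`, along
every outcome `ρ` of `σ` from `q₀` with initial credit `v q₀ + Δ`, every visited state
`ρ n` is winning and the energy level `v q₀ + Δ + EL(w, ρ(n))` at that position is at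
least `v (ρ n) + Δ`. -/
theorem stmt3 {Q : Type*} [Fintype Q] (Q1 : Set Q) (E : Q → Q → Prop)
    (hE : ∀ q, ∃ q', E q q') (p : Q → ℕ) (w : Q → Q → ℤ)
    (v : Q → ℕ)
    (hv : ∀ q, Player1Wins Q1 E p w q →
      IsLeast {c : ℕ | ∃ σ, IsStrategy Q1 E σ ∧
        ∀ ρ, IsOutcome Q1 E σ q ρ → ParityCond p ρ ∧ EnergyCond w c ρ} (v q))
    (q₀ : Q) (hq₀ : Player1Wins Q1 E p w q₀)
    (σ : List Q → Q → Q) (hσ : IsStrategy Q1 E σ)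
    (hopt : ∀ ρ, IsOutcome Q1 E σ q₀ ρ → ParityCond p ρ ∧ EnergyCond w (v q₀) ρ)
    (Δ : ℕ) (ρ : ℕ → Q) (hρ : IsOutcome Q1 E σ q₀ ρ) (n : ℕ) :
    Player1Wins Q1 E p w (ρ n) ∧
      (v (ρ n) : ℤ) + (Δ : ℤ) ≤ (v q₀ : ℤ) + (Δ : ℤ) + EL w ρ n :=
  stmt3_general Q1 E p w v hv q₀ σ hσ hopt Δ ρ hρ n
end

section
/- Let ⟨G,p,w⟩ be an energy parity game with n = |Q| ≥ 2 states, and let w'(q,q') = w(q,q') + Δ(q) with Δ(q) = (−1)^{p(q)} · (1/n^{p(q)+1} − 1/n^{p(q)+2}). Then for every state q, player 1 has a memoryless strategy that is good-for-energy in q in the energy parity game ⟨G,p,w⟩ if and only if player 1 has a memoryless strategy that wins the energy game ⟨G,w'⟩ from q with some finite initial credit (i.e., some memoryless strategy whose every outcome from q satisfies the energy condition with respect to w' for some initial credit). -/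
variable {Q : Type*}

/-- An outcome of the memoryless player-1 strategy `σ` from `q₀`. -/
def MemlessOutcome (Q1 : Set Q) (E : Q → Q → Prop) (σ : Q → Q) (q₀ : Q)
    (ρ : ℕ → Q) : Prop :=
  ρ 0 = q₀ ∧ IsPlay E ρ ∧ ∀ i, ρ i ∈ Q1 → ρ (i + 1) = σ (ρ i)

/-- The minimal priority on the cycle `ρ i, …, ρ (i+k)` is even. -/
def MinPrioEven (p : Q → ℕ) (ρ : ℕ → Q) (i k : ℕ) : Prop :=
  ∃ j ∈ Finset.Icc i (i + k), Even (p (ρ j)) ∧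
    ∀ l ∈ Finset.Icc i (i + k), p (ρ j) ≤ p (ρ l)

/-- The memoryless strategy `σ` is good-for-energy in `q`: every cycle of every outcome
of `σ` from `q` has positive energy level, or zero energy level and even minimal
priority. -/
def GoodForEnergy (Q1 : Set Q) (E : Q → Q → Prop) (p : Q → ℕ) (w : Q → Q → ℤ)
    (σ : Q → Q) (q : Q) : Prop :=
  ∀ ρ, MemlessOutcome Q1 E σ q ρ → ∀ i k, 0 < k → ρ i = ρ (i + k) →
    0 < ∑ j ∈ Finset.Ico i (i + k), w (ρ j) (ρ (j + 1)) ∨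
      (∑ j ∈ Finset.Ico i (i + k), w (ρ j) (ρ (j + 1)) = 0 ∧ MinPrioEven p ρ i k)

/-!
Write `w' = w + Δ ∘ p`. On a cycle of length at most `n = |Q|` the total `Δ` has absolute
value `< 1` and the sign of `(-1)^m`, `m` the minimal priority on the cycle: the contribution
`(n-1)/n^(m+2)` of a state of priority `m` outweighs the at most `n - 1` other terms, each of
size at most `(n-1)/n^(m+3)`. Since `w` is integral, such a short cycle is good (positive
`w`-weight, or zero `w`-weight and even minimal priority) iff its `w'`-weight is nonnegative.

If `σ` is good-for-energy, cutting short cycles out of a prefix of an outcome yields a shorter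
outcome (`σ` is memoryless) of smaller `w'`-energy, so the energy never drops below
`-n · max |w'|`. Conversely, if `σ` wins with some credit, a short cycle of negative `w'`-weight
could be pumped until the credit is exhausted; and a long cycle splits into a short cycle and a
shorter remaining cycle, whose goodness combines.
-/

open Finset

section Reindexing

/-- `ρ ∘ skipCycle a d` is `ρ` with the cycle `ρ a, …, ρ (a + d)` cut out. -/
def skipCycle (a d t : ℕ) : ℕ := if t < a then t else t + d

/-- `ρ ∘ loopCycle i k` follows `ρ` up to `i` and then repeats `ρ i, …, ρ (i + k - 1)` forever. -/
def loopCycle (i k t : ℕ) : ℕ := if t < i then t else i + (t - i) % k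

variable {ρ : ℕ → Q}

lemma comp_skipCycle_of_le {a d t : ℕ} (h : ρ a = ρ (a + d)) (ht : t ≤ a) :
    ρ (skipCycle a d t) = ρ t := by
  rcases ht.lt_or_eq with ht | rfl
  · simp [skipCycle, ht]
  · simp [skipCycle, h]

lemma comp_skipCycle_succ {a d : ℕ} (h : ρ a = ρ (a + d)) (t : ℕ) :
    ρ (skipCycle a d (t + 1)) = ρ (skipCycle a d t + 1) := by
  rcases lt_or_ge t a with ht | ht
  · rw [comp_skipCycle_of_le h ht, skipCycle, if_pos ht]
  · simp only [skipCycle, not_lt.mpr ht, not_lt.mpr (ht.trans t.le_succ), if_false]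
    rw [add_right_comm]

lemma comp_loopCycle_succ {i k : ℕ} (hk : 0 < k) (h : ρ i = ρ (i + k)) (t : ℕ) :
    ρ (loopCycle i k (t + 1)) = ρ (loopCycle i k t + 1) := by
  rcases lt_trichotomy (t + 1) i with ht | ht | ht
  · simp [loopCycle, ht, (Nat.lt_succ_self t).trans ht]
  · simp [loopCycle, ← ht]
  · have hmod : (t + 1 - i) % k = ((t - i) % k + 1) % k := by
      rw [Nat.mod_add_mod, Nat.sub_add_comm (by omega)]
    simp only [loopCycle, not_lt.mpr ht.le, not_lt.mpr (Nat.le_of_lt_succ ht), if_false, hmod]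
    have hr := Nat.mod_lt (t - i) hk
    rcases (Nat.succ_le_of_lt hr).lt_or_eq with hr | hr
    · rw [Nat.mod_eq_of_lt hr, add_assoc]
    · rw [Nat.succ_eq_add_one] at hr
      rw [hr, Nat.mod_self, add_zero, h, add_assoc, hr]

lemma sum_Ico_skipCycle {M : Type*} [AddCommGroup M] (e : ℕ → M) {i a d m : ℕ}
    (hia : i ≤ a) (ham : a ≤ m) :
    ∑ j ∈ Ico i m, e (skipCycle a d j)
      = ∑ j ∈ Ico i (m + d), e j - ∑ j ∈ Ico a (a + d), e j := by
  have hlow : ∑ j ∈ Ico i a, e (skipCycle a d j) = ∑ j ∈ Ico i a, e j :=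
    sum_congr rfl fun j hj => by simp [skipCycle, (mem_Ico.mp hj).2]
  have hhigh : ∑ j ∈ Ico a m, e (skipCycle a d j) = ∑ j ∈ Ico (a + d) (m + d), e j := by
    rw [← sum_Ico_add']
    exact sum_congr rfl fun j hj => by simp [skipCycle, not_lt.mpr (mem_Ico.mp hj).1]
  rw [← sum_Ico_consecutive _ hia ham, hlow, hhigh,
    ← sum_Ico_consecutive e hia (ham.trans le_self_add),
    ← sum_Ico_consecutive e (le_self_add : a ≤ a + d) (by omega : a + d ≤ m + d)]
  abel

lemma sum_range_loopCycle {M : Type*} [AddCommMonoid M] (e : ℕ → M) (i k t : ℕ) :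
    ∑ j ∈ range (i + t * k), e (loopCycle i k j)
      = ∑ j ∈ range i, e j + t • ∑ j ∈ Ico i (i + k), e j := by
  induction t with
  | zero => simpa using sum_congr rfl fun j hj => by simp [loopCycle, mem_range.mp hj]
  | succ t ih =>
    have hperiod : ∑ x ∈ range k, e (loopCycle i k (i + t * k + x)) = ∑ j ∈ Ico i (i + k), e j := by
      rw [sum_Ico_eq_sum_range, add_tsub_cancel_left]
      refine sum_congr rfl fun x hx => ?_
      have hx := mem_range.mp hx
      rw [loopCycle, if_neg (by omega), add_assoc, Nat.add_sub_cancel_left, Nat.mul_add_mod',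
        Nat.mod_eq_of_lt hx]
    rw [add_mul, one_mul, ← add_assoc, sum_range_add, ih, hperiod, succ_nsmul, add_assoc]

end Reindexing

section MinPriority

variable {p : Q → ℕ}

def HasEvenMinPrio (p : Q → ℕ) (S : Finset Q) : Prop :=
  ∃ q ∈ S, Even (p q) ∧ ∀ q' ∈ S, p q ≤ p q'

lemma hasEvenMinPrio_iff {S : Finset Q} {q : Q} (hq : q ∈ S) (hmin : ∀ q' ∈ S, p q ≤ p q') :
    HasEvenMinPrio p S ↔ Even (p q) := by
  refine ⟨fun ⟨q₀, hq₀, hev, hmin₀⟩ => ?_, fun hev => ⟨q, hq, hev, hmin⟩⟩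
  rwa [le_antisymm (hmin q₀ hq₀) (hmin₀ q hq)]

lemma HasEvenMinPrio.union [DecidableEq Q] {S T : Finset Q} (hS : HasEvenMinPrio p S)
    (hT : HasEvenMinPrio p T) : HasEvenMinPrio p (S ∪ T) := by
  obtain ⟨s, hs, hs_ev, hs_min⟩ := hS
  obtain ⟨t, ht, ht_ev, ht_min⟩ := hT
  rcases le_total (p s) (p t) with hst | hts
  · refine ⟨s, mem_union_left T hs, hs_ev, fun q hq => ?_⟩
    rcases mem_union.mp hq with hq | hq
    exacts [hs_min q hq, hst.trans (ht_min q hq)]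
  · refine ⟨t, mem_union_right S ht, ht_ev, fun q hq => ?_⟩
    rcases mem_union.mp hq with hq | hq
    exacts [hts.trans (hs_min q hq), ht_min q hq]

lemma minPrioEven_iff_hasEvenMinPrio [DecidableEq Q] {ρ : ℕ → Q} {i k : ℕ} :
    MinPrioEven p ρ i k ↔ HasEvenMinPrio p ((Icc i (i + k)).image ρ) := by
  simp only [MinPrioEven, HasEvenMinPrio, exists_mem_image, forall_mem_image]

end MinPriority

section Cycles

variable {ρ : ℕ → Q}

lemma image_Icc_eq_image_Ico [DecidableEq Q] {i k : ℕ} (hk : 0 < k) (hcyc : ρ i = ρ (i + k)) :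
    (Icc i (i + k)).image ρ = (Ico i (i + k)).image ρ := by
  rw [← Ico_insert_right (by omega), image_insert, hcyc.symm]
  exact insert_eq_of_mem (mem_image_of_mem ρ (by simp [hk]))

lemma image_Icc_eq_union_skipCycle [DecidableEq Q] {i k a d : ℕ} (hia : i ≤ a)
    (hak : a + d ≤ i + k) (hcyc : ρ a = ρ (a + d)) :
    (Icc i (i + k)).image ρ
      = (Icc a (a + d)).image ρ ∪ (Icc i (i + (k - d))).image (ρ ∘ skipCycle a d) := by
  ext q
  simp only [mem_union, mem_image, mem_Icc, Function.comp_apply]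
  constructor
  · rintro ⟨l, hl, rfl⟩
    by_cases hl' : a ≤ l ∧ l ≤ a + d
    · exact Or.inl ⟨l, hl', rfl⟩
    rcases lt_or_ge l a with hla | hla
    · exact Or.inr ⟨l, by omega, comp_skipCycle_of_le hcyc hla.le⟩
    · refine Or.inr ⟨l - d, by omega, ?_⟩
      rw [skipCycle, if_neg (by omega), Nat.sub_add_cancel (by omega)]
  · rintro (⟨l, hl, rfl⟩ | ⟨l, hl, rfl⟩)
    · exact ⟨l, by omega, rfl⟩
    · unfold skipCycle
      split_ifs
      exacts [⟨l, by omega, rfl⟩, ⟨l + d, by omega, rfl⟩]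

variable {Q1 : Set Q} {E : Q → Q → Prop} {σ : Q → Q} {q : Q}

lemma MemlessOutcome.comp (hρ : MemlessOutcome Q1 E σ q ρ) {f : ℕ → ℕ} (h0 : ρ (f 0) = ρ 0)
    (hsucc : ∀ t, ρ (f (t + 1)) = ρ (f t + 1)) : MemlessOutcome Q1 E σ q (ρ ∘ f) := by
  obtain ⟨hq, hplay, hσ⟩ := hρ
  refine ⟨h0.trans hq, fun t => ?_, fun t ht => ?_⟩
  · simpa only [Function.comp_apply, hsucc] using hplay (f t)
  · simpa only [Function.comp_apply, hsucc] using hσ (f t) ht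

lemma exists_cycle_le_card [Fintype Q] (ρ : ℕ → Q) (i : ℕ) :
    ∃ a d, i ≤ a ∧ 0 < d ∧ a + d ≤ i + Fintype.card Q ∧ ρ a = ρ (a + d) := by
  obtain ⟨x, y, hxy, hρxy⟩ := Fintype.exists_ne_map_eq_of_card_lt
    (fun x : Fin (Fintype.card Q + 1) => ρ (i + x)) (by simp)
  wlog h : x < y generalizing x y
  · exact this y x hxy.symm hρxy.symm (lt_of_le_of_ne (not_lt.mp h) hxy.symm)
  exact ⟨i + x, y - x, by omega, by omega, by omega, by simpa [add_assoc, h.le] using hρxy⟩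

end Cycles

section ParityBonus

variable {K : Type*} [Field K] [LinearOrder K] [IsStrictOrderedRing K] {n : K}

/-- The paper's `Δ(q)` is `parityBonus n (p q)`. -/
def parityBonus (n : K) (k : ℕ) : K := (-1) ^ k * (1 / n ^ (k + 1) - 1 / n ^ (k + 2))

lemma parityBonus_eq (hn : n ≠ 0) (k : ℕ) :
    parityBonus n k = (-1) ^ k * ((n - 1) / n ^ (k + 2)) := by
  rw [parityBonus, pow_succ n (k + 1)]
  field_simp

lemma abs_parityBonus (hn : 1 ≤ n) (k : ℕ) : |parityBonus n k| = (n - 1) / n ^ (k + 2) := by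
  rw [parityBonus_eq (by positivity) k, abs_mul, abs_pow, abs_neg, abs_one, one_pow, one_mul,
    abs_of_nonneg (by have := zero_le_one.trans hn; positivity)]

lemma abs_sum_parityBonus_lt_one {ι : Type*} (hn : 1 ≤ n) (s : Finset ι) (hs : (#s : K) ≤ n)
    (g : ι → ℕ) : |∑ t ∈ s, parityBonus n (g t)| < 1 := by
  have hn0 : 0 < n := zero_lt_one.trans_le hn
  calc |∑ t ∈ s, parityBonus n (g t)|
      ≤ ∑ t ∈ s, |parityBonus n (g t)| := abs_sum_le_sum_abs _ _
    _ ≤ ∑ _t ∈ s, (n - 1) / n ^ 2 := sum_le_sum fun t _ => by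
        rw [abs_parityBonus hn]
        exact div_le_div_of_nonneg_left (by linarith) (by positivity)
          (pow_le_pow_right₀ hn (by omega))
    _ = #s * ((n - 1) / n ^ 2) := by rw [sum_const, nsmul_eq_mul]
    _ ≤ n * ((n - 1) / n ^ 2) := by gcongr
    _ = 1 - 1 / n := by field_simp
    _ < 1 := by linarith [one_div_pos.mpr hn0]

lemma neg_le_neg_one_pow_mul_parityBonus (hn : 1 ≤ n) {m k : ℕ} (hmk : m < k) :
    -((n - 1) / n ^ (m + 3)) ≤ (-1) ^ m * parityBonus n k := by
  have hbound := neg_abs_le ((-1) ^ m * parityBonus n k)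
  rw [abs_mul, abs_pow, abs_neg, abs_one, one_pow, one_mul, abs_parityBonus hn] at hbound
  refine le_trans ?_ hbound
  exact neg_le_neg (div_le_div_of_nonneg_left (by linarith) (by positivity)
    (pow_le_pow_right₀ hn (by omega)))

lemma neg_one_pow_mul_parityBonus_self (hn : n ≠ 0) (m : ℕ) :
    (-1) ^ m * parityBonus n m = n * ((n - 1) / n ^ (m + 3)) := by
  rw [parityBonus_eq hn, ← mul_assoc, ← pow_add, Even.neg_one_pow ⟨m, rfl⟩, one_mul]
  field_simp
  ring

lemma neg_one_pow_mul_sum_parityBonus_pos {ι : Type*} (hn : 1 < n) {s : Finset ι}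
    (hs : (#s : K) ≤ n) {g : ι → ℕ} {j : ι} (hj : j ∈ s) (hmin : ∀ t ∈ s, g j ≤ g t) :
    0 < (-1) ^ g j * ∑ t ∈ s, parityBonus n (g t) := by
  classical
  -- the term at `j` is `n * x`, every other term is at least `-x`, and there are at most `n - 1`
  set x := (n - 1) / n ^ (g j + 3)
  have hx0 : 0 < x := div_pos (by linarith) (by positivity)
  have hterm : ∀ t ∈ s.erase j, -x ≤ (-1) ^ g j * parityBonus n (g t) := by
    intro t ht
    rcases (hmin t (mem_of_mem_erase ht)).lt_or_eq with hlt | heq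
    · exact neg_le_neg_one_pow_mul_parityBonus hn.le hlt
    · rw [← heq, neg_one_pow_mul_parityBonus_self (by positivity)]
      linarith [mul_pos (zero_lt_one.trans hn) hx0]
  have hrest := card_nsmul_le_sum _ _ _ hterm
  have hcard : (#(s.erase j) : K) + 1 ≤ n := by exact_mod_cast (card_erase_add_one hj).symm ▸ hs
  rw [mul_sum, ← add_sum_erase _ _ hj, neg_one_pow_mul_parityBonus_self (by positivity)]
  rw [nsmul_eq_mul] at hrest
  nlinarith

end ParityBonus

section Games

variable {ρ : ℕ → Q} {Q1 : Set Q} {E : Q → Q → Prop} {σ : Q → Q} {q : Q}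

lemma sum_Ico_comp_skipCycle {M : Type*} [AddCommGroup M] (v : Q → Q → M) {i a d m : ℕ}
    (hcyc : ρ a = ρ (a + d)) (hia : i ≤ a) (ham : a ≤ m) :
    ∑ j ∈ Ico i m, v ((ρ ∘ skipCycle a d) j) ((ρ ∘ skipCycle a d) (j + 1))
      = ∑ j ∈ Ico i (m + d), v (ρ j) (ρ (j + 1)) - ∑ j ∈ Ico a (a + d), v (ρ j) (ρ (j + 1)) := by
  simp only [Function.comp_apply, comp_skipCycle_succ hcyc]
  exact sum_Ico_skipCycle (fun j => v (ρ j) (ρ (j + 1))) hia ham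

def IsGoodCycle (p : Q → ℕ) (w : Q → Q → ℤ) (ρ : ℕ → Q) (i k : ℕ) : Prop :=
  0 < ∑ j ∈ Ico i (i + k), w (ρ j) (ρ (j + 1)) ∨
    (∑ j ∈ Ico i (i + k), w (ρ j) (ρ (j + 1)) = 0 ∧ MinPrioEven p ρ i k)

lemma IsGoodCycle.of_skipCycle {p : Q → ℕ} {w : Q → Q → ℤ} {i k a d : ℕ} (hia : i ≤ a)
    (hak : a + d ≤ i + k) (hcyc : ρ a = ρ (a + d)) (hin : IsGoodCycle p w ρ a d)
    (hout : IsGoodCycle p w (ρ ∘ skipCycle a d) i (k - d)) : IsGoodCycle p w ρ i k := by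
  classical
  have hsum := sum_Ico_comp_skipCycle w hcyc hia (show a ≤ i + (k - d) by omega)
  rw [show i + (k - d) + d = i + k by omega] at hsum
  unfold IsGoodCycle at *
  rw [hsum] at hout
  rw [minPrioEven_iff_hasEvenMinPrio] at hin hout ⊢
  rw [image_Icc_eq_union_skipCycle hia hak hcyc]
  rcases hin with hin | ⟨hin, hin_min⟩ <;> rcases hout with hout | ⟨hout, hout_min⟩
  iterate 3 exact Or.inl (by linarith)
  exact Or.inr ⟨by linarith, hin_min.union hout_min⟩

lemma isGoodCycle_iff_nonneg {n : ℕ} (hn : 2 ≤ n) {p : Q → ℕ} {w : Q → Q → ℤ}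
    {w' : Q → Q → ℚ} (hw' : ∀ q q', w' q q' = w q q' + parityBonus (n : ℚ) (p q)) {i k : ℕ}
    (hk : 0 < k) (hkn : k ≤ n) (hcyc : ρ i = ρ (i + k)) :
    IsGoodCycle p w ρ i k ↔ 0 ≤ ∑ j ∈ Ico i (i + k), w' (ρ j) (ρ (j + 1)) := by
  classical
  obtain ⟨j, hj, hj_min⟩ := exists_min_image (Ico i (i + k)) (fun t => p (ρ t)) ⟨i, by simp [hk]⟩
  have hmin : MinPrioEven p ρ i k ↔ Even (p (ρ j)) := by
    rw [minPrioEven_iff_hasEvenMinPrio, image_Icc_eq_image_Ico hk hcyc]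
    exact hasEvenMinPrio_iff (mem_image_of_mem ρ hj) (forall_mem_image.mpr hj_min)
  have hn' : (1 : ℚ) < n := by exact_mod_cast hn
  have hcard : (#(Ico i (i + k)) : ℚ) ≤ n := by simpa using hkn
  have hD := abs_lt.mp (abs_sum_parityBonus_lt_one hn'.le _ hcard fun t => p (ρ t))
  have hsign := neg_one_pow_mul_sum_parityBonus_pos (g := fun t => p (ρ t)) hn' hcard hj hj_min
  rw [IsGoodCycle, hmin]
  set W := ∑ j ∈ Ico i (i + k), w (ρ j) (ρ (j + 1))
  set D := ∑ t ∈ Ico i (i + k), parityBonus (n : ℚ) (p (ρ t))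
  have hsplit : ∑ j ∈ Ico i (i + k), w' (ρ j) (ρ (j + 1)) = W + D := by
    simp only [W, D, hw', sum_add_distrib, Int.cast_sum]
  rw [hsplit]
  rcases lt_trichotomy W 0 with hW | hW | hW
  · have : (W : ℚ) ≤ -1 := by exact_mod_cast Int.le_sub_one_of_lt hW
    exact iff_of_false (by rintro (h | ⟨h, -⟩) <;> omega) (by linarith)
  · simp only [hW, lt_irrefl, true_and, false_or, Int.cast_zero, zero_add]
    rcases Nat.even_or_odd (p (ρ j)) with he | ho
    · rw [he.neg_one_pow, one_mul] at hsign
      exact iff_of_true he hsign.le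
    · rw [ho.neg_one_pow, neg_one_mul] at hsign
      exact iff_of_false (Nat.not_even_iff_odd.mpr ho) (by linarith)
  · have : (1 : ℚ) ≤ W := by exact_mod_cast hW
    exact iff_of_true (Or.inl hW) (by linarith)

lemma neg_card_mul_le_sum_of_cycles_nonneg [Fintype Q] {v : Q → Q → ℚ} {W : ℚ} (hW : 0 ≤ W)
    (hv : ∀ a b, -W ≤ v a b)
    (hcycles : ∀ ρ, MemlessOutcome Q1 E σ q ρ → ∀ i k, 0 < k → k ≤ Fintype.card Q →
      ρ i = ρ (i + k) → 0 ≤ ∑ j ∈ Ico i (i + k), v (ρ j) (ρ (j + 1)))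
    (m : ℕ) : ∀ ρ, MemlessOutcome Q1 E σ q ρ →
      -(Fintype.card Q * W) ≤ ∑ j ∈ range m, v (ρ j) (ρ (j + 1)) := by
  induction m using Nat.strong_induction_on with
  | _ m ih =>
  intro ρ hρ
  by_cases hm : m ≤ Fintype.card Q
  · calc -(Fintype.card Q * W) ≤ -(m * W) := by gcongr
      _ = ∑ _j ∈ range m, -W := by simp
      _ ≤ _ := sum_le_sum fun j _ => hv _ _
  obtain ⟨a, d, -, hd, had, hcyc⟩ := exists_cycle_le_card ρ 0
  have hcut := sum_Ico_comp_skipCycle v hcyc (Nat.zero_le a) (show a ≤ m - d by omega)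
  rw [← range_eq_Ico, ← range_eq_Ico, Nat.sub_add_cancel (by omega)] at hcut
  have hshort := ih (m - d) (by omega) _
    (hρ.comp (comp_skipCycle_of_le hcyc (Nat.zero_le a)) (comp_skipCycle_succ hcyc))
  linarith [hcycles ρ hρ a d hd (by omega) hcyc]

lemma exists_credit_of_cycles_nonneg [Fintype Q] (v : Q → Q → ℚ)
    (hcycles : ∀ ρ, MemlessOutcome Q1 E σ q ρ → ∀ i k, 0 < k → k ≤ Fintype.card Q →
      ρ i = ρ (i + k) → 0 ≤ ∑ j ∈ Ico i (i + k), v (ρ j) (ρ (j + 1))) :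
    ∃ c₀ : ℚ, 0 ≤ c₀ ∧ ∀ ρ, MemlessOutcome Q1 E σ q ρ →
      ∀ m, 0 ≤ c₀ + ∑ j ∈ range m, v (ρ j) (ρ (j + 1)) := by
  let W := ∑ x : Q × Q, |v x.1 x.2|
  have hW : 0 ≤ W := sum_nonneg fun _ _ => abs_nonneg _
  have hv (a b : Q) : -W ≤ v a b := by
    have := single_le_sum (fun x _ => abs_nonneg (v x.1 x.2)) (mem_univ (a, b))
    exact neg_le_of_abs_le this
  refine ⟨Fintype.card Q * W, mul_nonneg (Nat.cast_nonneg _) hW, fun ρ hρ m => ?_⟩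
  have := neg_card_mul_le_sum_of_cycles_nonneg hW hv hcycles m ρ hρ
  linarith

lemma cycle_nonneg_of_credit {v : Q → Q → ℚ} {c₀ : ℚ}
    (hcredit : ∀ ρ, MemlessOutcome Q1 E σ q ρ →
      ∀ m, 0 ≤ c₀ + ∑ j ∈ range m, v (ρ j) (ρ (j + 1)))
    (hρ : MemlessOutcome Q1 E σ q ρ) {i k : ℕ} (hk : 0 < k) (hcyc : ρ i = ρ (i + k)) :
    0 ≤ ∑ j ∈ Ico i (i + k), v (ρ j) (ρ (j + 1)) := by
  by_contra! hneg
  set S := ∑ j ∈ Ico i (i + k), v (ρ j) (ρ (j + 1))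
  set A := ∑ j ∈ range i, v (ρ j) (ρ (j + 1))
  obtain ⟨t, ht⟩ := exists_nat_gt ((c₀ + A) / -S)
  rw [div_lt_iff₀ (neg_pos.mpr hneg)] at ht
  have hloop := hcredit _ (hρ.comp (by unfold loopCycle; split_ifs <;> simp_all)
    (comp_loopCycle_succ hk hcyc)) (i + t * k)
  have hsum : ∑ j ∈ range (i + t * k),
      v ((ρ ∘ loopCycle i k) j) ((ρ ∘ loopCycle i k) (j + 1)) = A + t * S := by
    simp only [Function.comp_apply, comp_loopCycle_succ hk hcyc, ← nsmul_eq_mul]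
    exact sum_range_loopCycle (fun j => v (ρ j) (ρ (j + 1))) i k t
  linarith

lemma goodForEnergy_of_short_cycles [Fintype Q] {p : Q → ℕ} {w : Q → Q → ℤ}
    (hcycles : ∀ ρ, MemlessOutcome Q1 E σ q ρ → ∀ i k, 0 < k → k ≤ Fintype.card Q →
      ρ i = ρ (i + k) → IsGoodCycle p w ρ i k) :
    GoodForEnergy Q1 E p w σ q := by
  intro ρ hρ i k hk hcyc
  induction k using Nat.strong_induction_on generalizing ρ i with
  | _ k ih =>
  by_cases hkn : k ≤ Fintype.card Q
  · exact hcycles ρ hρ i k hk hkn hcyc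
  obtain ⟨a, d, hia, hd, had, hcyc_in⟩ := exists_cycle_le_card ρ i
  have hcyc_out : (ρ ∘ skipCycle a d) i = (ρ ∘ skipCycle a d) (i + (k - d)) := by
    rw [Function.comp_apply, Function.comp_apply, comp_skipCycle_of_le hcyc_in hia, skipCycle,
      if_neg (by omega), show i + (k - d) + d = i + k by omega, hcyc]
  exact IsGoodCycle.of_skipCycle hia (by omega) hcyc_in (ih d (by omega) ρ hρ a hd hcyc_in)
    (ih (k - d) (by omega) _ (hρ.comp (comp_skipCycle_of_le hcyc_in (Nat.zero_le a))
      (comp_skipCycle_succ hcyc_in)) i (by omega) hcyc_out)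

end Games

theorem stmt13_general {Q : Type*} [Fintype Q] (Q1 : Set Q) (E : Q → Q → Prop)
    (p : Q → ℕ) (w : Q → Q → ℤ)
    (n : ℕ) (hn : Fintype.card Q = n) (h2 : 2 ≤ n)
    (w' : Q → Q → ℚ)
    (hw' : ∀ q q', w' q q' = (w q q' : ℚ) + (-1 : ℚ) ^ (p q) *
      (1 / (n : ℚ) ^ (p q + 1) - 1 / (n : ℚ) ^ (p q + 2)))
    (q : Q) :
    (∃ σ : Q → Q, (∀ s ∈ Q1, E s (σ s)) ∧ GoodForEnergy Q1 E p w σ q) ↔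
      (∃ σ : Q → Q, (∀ s ∈ Q1, E s (σ s)) ∧ ∃ c₀ : ℚ, 0 ≤ c₀ ∧
        ∀ ρ, MemlessOutcome Q1 E σ q ρ →
          ∀ m, 0 ≤ c₀ + ∑ j ∈ Finset.range m, w' (ρ j) (ρ (j + 1))) := by
  have hshort : ∀ ρ : ℕ → Q, ∀ i k, 0 < k → k ≤ Fintype.card Q → ρ i = ρ (i + k) →
      (IsGoodCycle p w ρ i k ↔ 0 ≤ ∑ j ∈ Ico i (i + k), w' (ρ j) (ρ (j + 1))) :=
    fun ρ i k hk hkn hcyc => isGoodCycle_iff_nonneg h2 hw' hk (hn ▸ hkn) hcyc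
  constructor
  · rintro ⟨σ, hσ, hgood⟩
    exact ⟨σ, hσ, exists_credit_of_cycles_nonneg w' fun ρ hρ i k hk hkn hcyc =>
      (hshort ρ i k hk hkn hcyc).1 (hgood ρ hρ i k hk hcyc)⟩
  · rintro ⟨σ, hσ, c₀, -, hcredit⟩
    exact ⟨σ, hσ, goodForEnergy_of_short_cycles fun ρ hρ i k hk hkn hcyc =>
      (hshort ρ i k hk hkn hcyc).2 (cycle_nonneg_of_credit hcredit hρ hk hcyc)⟩

/-- with `w' q q' = w q q' + Δ(q)`, player 1 has a memoryless strategy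
good-for-energy in `q` in the energy parity game `⟨G,p,w⟩` iff player 1 has a memoryless
strategy winning the energy game `⟨G,w'⟩` from `q` with some finite initial credit. -/
theorem stmt13 {Q : Type*} [Fintype Q] (Q1 : Set Q) (E : Q → Q → Prop)
    (hE : ∀ q, ∃ q', E q q') (p : Q → ℕ) (w : Q → Q → ℤ)
    (n : ℕ) (hn : Fintype.card Q = n) (h2 : 2 ≤ n)
    (w' : Q → Q → ℚ)
    (hw' : ∀ q q', w' q q' = (w q q' : ℚ) + (-1 : ℚ) ^ (p q) *
      (1 / (n : ℚ) ^ (p q + 1) - 1 / (n : ℚ) ^ (p q + 2)))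
    (q : Q) :
    (∃ σ : Q → Q, (∀ s ∈ Q1, E s (σ s)) ∧ GoodForEnergy Q1 E p w σ q) ↔
      (∃ σ : Q → Q, (∀ s ∈ Q1, E s (σ s)) ∧ ∃ c₀ : ℚ, 0 ≤ c₀ ∧
        ∀ ρ, MemlessOutcome Q1 E σ q ρ →
          ∀ m, 0 ≤ c₀ + ∑ j ∈ Finset.range m, w' (ρ j) (ρ (j + 1))) :=
  stmt13_general Q1 E p w n hn h2 w' hw' q
end

section
/- Let ⟨G,p,w⟩ be a game graph with priority function p and integer weight function w, let ε = 1/(|Q|+1), and let w⁺(e) = (|Q|+1)·w(e) + 1. Let σ be a player-1 strategy with finite memory of size m such that every cycle C in the product graph G_σ that is reachable from the initial state ⟨m₀,q₀⟩ has even minimal priority and satisfies Σ_{e∈C} w(e) ≥ −ε·|C| (equivalently, Σ_{e∈C} w⁺(e) ≥ 0, where edge weights of G_σ are those of the projected edges of G). Then σ is winning from q₀ in the energy parity game ⟨G,p,w⁺⟩ with initial credit N·W⁺, where N = m·|Q| and W⁺ is the largest absolute value of a weight of w⁺: every outcome of σ from q₀ satisfies the parity condition and the energy condition with respect to w⁺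 with this initial credit. -/
variable {Q : Type*}

/-- Memory state of the transducer after reading `ρ 0, …, ρ (i-1)`. -/
def MemRun {M : Type*} (αu : M → Q → M) (m₀ : M) (ρ : ℕ → Q) : ℕ → M
  | 0 => m₀
  | i + 1 => αu (MemRun αu m₀ ρ i) (ρ i)

/-- An outcome of the finite-memory strategy given by the transducer `⟨M, m₀, αu, αn⟩`. -/
def TransOutcome {M : Type*} (Q1 : Set Q) (E : Q → Q → Prop)
    (αu : M → Q → M) (αn : M → Q → Q) (m₀ : M) (q₀ : Q) (ρ : ℕ → Q) : Prop :=
  ρ 0 = q₀ ∧ IsPlay E ρ ∧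
    ∀ i, ρ i ∈ Q1 → ρ (i + 1) = αn (MemRun αu m₀ ρ i) (ρ i)

/-- The product graph `G_σ` of the game with the transducer `⟨M, m₀, αu, αn⟩`. -/
def EProd {M : Type*} (Q1 : Set Q) (E : Q → Q → Prop)
    (αu : M → Q → M) (αn : M → Q → Q) : M × Q → M × Q → Prop :=
  fun x y => y.1 = αu x.1 x.2 ∧
    ((x.2 ∈ Q1 ∧ y.2 = αn x.1 x.2) ∨ (x.2 ∉ Q1 ∧ E x.2 y.2))

/-!
Follow the outcome in the product graph `G_σ`, whose states are pairs (memory, game state).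

Parity: some product state recurs infinitely often. Take two of its occurrences, the first
late enough that every game state seen from then on recurs infinitely often, the second late
enough that every infinitely recurring game state has been seen in between. The segment
between them is a reachable cycle, so its minimal priority is even, and that priority is the
minimal one occurring infinitely often.

Energy: a path of length at most `N = |M × Q|` loses at most `N · W⁺`. A longer path repeats a
product state among its first `N + 1` positions; cutting out that cycle, whose `w⁺`-weight is
nonnegative, leaves a shorter path from the same reachable start, with no larger weight.
-/

open Finset Relation

section Paths

variable {S : Type*} {R : S → S → Prop}

theorem reflTransGen_of_path {x₀ : S} {c : ℕ → S} {n : ℕ} (h0 : ReflTransGen R x₀ (c 0))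
    (hc : ∀ j < n, R (c j) (c (j + 1))) : ∀ j ≤ n, ReflTransGen R x₀ (c j) := by
  intro j hj
  induction j with
  | zero => exact h0
  | succ j ih => exact (ih (by omega)).tail (hc j (by omega))

theorem exists_repeat_le_card [Fintype S] (c : ℕ → S) :
    ∃ i d, 0 < d ∧ i + d ≤ Fintype.card S ∧ c i = c (i + d) := by
  obtain ⟨a, b, hne, hab⟩ := Fintype.exists_ne_map_eq_of_card_lt
    (fun l : Fin (Fintype.card S + 1) => c l) (by simp)
  rcases Fin.lt_or_lt_of_ne hne with h | h
  · exact ⟨a, b - a, by omega, by omega, by rwa [Nat.add_sub_cancel' (by omega)]⟩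
  · exact ⟨b, a - b, by omega, by omega, by rw [Nat.add_sub_cancel' (by omega)]; exact hab.symm⟩

def cutCycle (c : ℕ → S) (i d : ℕ) : ℕ → S :=
  fun l => c (if l < i then l else l + d)

variable {c : ℕ → S} {i d : ℕ}

theorem cutCycle_zero (hrep : c i = c (i + d)) : cutCycle c i d 0 = c 0 := by
  unfold cutCycle
  split_ifs with h
  · rfl
  · obtain rfl : i = 0 := by omega
    simpa using hrep.symm

theorem cutCycle_isPath {r : ℕ} (hc : ∀ j < i + d + r, R (c j) (c (j + 1)))
    (hrep : c i = c (i + d)) :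
    ∀ l < i + r, R (cutCycle c i d l) (cutCycle c i d (l + 1)) := by
  intro l hl
  unfold cutCycle
  split_ifs with h₁ h₂ h₂
  · exact hc l (by omega)
  · obtain rfl : i = l + 1 := by omega
    rw [← hrep]
    exact hc l (by omega)
  · omega
  · rw [show l + 1 + d = l + d + 1 by omega]
    exact hc (l + d) (by omega)

theorem sum_cutCycle (wt : S → S → ℤ) (r : ℕ) (hrep : c i = c (i + d)) :
    ∑ l ∈ range (i + r), wt (cutCycle c i d l) (cutCycle c i d (l + 1)) +
        ∑ l ∈ range d, wt (c (i + l)) (c (i + l + 1)) =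
      ∑ l ∈ range (i + d + r), wt (c l) (c (l + 1)) := by
  have hpre : ∑ l ∈ range i, wt (cutCycle c i d l) (cutCycle c i d (l + 1)) =
      ∑ l ∈ range i, wt (c l) (c (l + 1)) := by
    refine sum_congr rfl fun l hl => ?_
    have hl : l < i := mem_range.1 hl
    unfold cutCycle
    split_ifs with h
    · rfl
    · obtain rfl : i = l + 1 := by omega
      rw [← hrep]
  have hsuf : ∀ l, wt (cutCycle c i d (i + l)) (cutCycle c i d (i + l + 1)) =
      wt (c (i + d + l)) (c (i + d + l + 1)) := by
    intro l
    unfold cutCycle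
    rw [if_neg (by omega), if_neg (by omega), show i + l + d = i + d + l by omega,
      show i + l + 1 + d = i + d + l + 1 by omega]
  simp only [sum_range_add, hpre, hsuf]
  ring

theorem neg_card_mul_le_sum_of_cycles_nonneg_s15 [Fintype S] (wt : S → S → ℤ) (W : ℕ) (x₀ : S)
    (hW : ∀ x y, R x y → |wt x y| ≤ W)
    (hcyc : ∀ (k : ℕ) (c : ℕ → S), 0 < k → c 0 = c k → (∀ j < k, R (c j) (c (j + 1))) →
      (∀ j ≤ k, ReflTransGen R x₀ (c j)) → 0 ≤ ∑ j ∈ range k, wt (c j) (c (j + 1)))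
    (n : ℕ) (c : ℕ → S) (h0 : ReflTransGen R x₀ (c 0)) (hc : ∀ j < n, R (c j) (c (j + 1))) :
    -(Fintype.card S * W : ℤ) ≤ ∑ j ∈ range n, wt (c j) (c (j + 1)) := by
  induction n using Nat.strong_induction_on generalizing c with
  | _ n ih =>
    by_cases hn : n ≤ Fintype.card S
    · have hedge : ∑ j ∈ range n, (-W : ℤ) ≤ ∑ j ∈ range n, wt (c j) (c (j + 1)) :=
        sum_le_sum fun j hj => neg_le_of_abs_le (hW _ _ (hc j (mem_range.1 hj)))
      have hlen : (n * W : ℤ) ≤ Fintype.card S * W := by gcongr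
      simp only [sum_const, card_range, nsmul_eq_mul] at hedge
      linarith
    · obtain ⟨i, d, hd, hid, hrep⟩ := exists_repeat_le_card c
      obtain ⟨r, rfl⟩ : ∃ r, n = i + d + r := ⟨n - (i + d), by omega⟩
      have hreach := reflTransGen_of_path h0 hc
      have hloop : 0 ≤ ∑ l ∈ range d, wt (c (i + l)) (c (i + l + 1)) :=
        hcyc d (fun l => c (i + l)) hd hrep (fun j _ => hc (i + j) (by omega))
          (fun j _ => hreach (i + j) (by omega))
      have hcut := ih (i + r) (by omega) (cutCycle c i d) (by rwa [cutCycle_zero hrep])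
        (cutCycle_isPath hc hrep)
      linarith [sum_cutCycle wt r hrep]

end Paths

section Recurrence

variable {S : Type*}

theorem exists_infOften [Finite S] (x : ℕ → S) : ∃ s, InfOften x s := by
  obtain ⟨s, hs⟩ := Finite.exists_infinite_fiber x
  refine ⟨s, fun N => ?_⟩
  obtain ⟨n, hns, hn⟩ := (Set.infinite_coe_iff.mp hs).exists_gt N
  exact ⟨n, hn.le, hns⟩

theorem exists_forall_ge_infOften [Finite S] (x : ℕ → S) :
    ∃ T, ∀ n, T ≤ n → InfOften x (x n) := by
  have hlast : ∀ s, ∃ N, ¬ InfOften x s → ∀ n, N ≤ n → x n ≠ s := fun s => by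
    by_cases hs : InfOften x s
    · exact ⟨0, fun h => (h hs).elim⟩
    · simp only [InfOften, not_forall, not_exists, not_and] at hs
      obtain ⟨N, hN⟩ := hs
      exact ⟨N, fun _ => hN⟩
  choose N hN using hlast
  obtain ⟨T, hT⟩ := (Set.finite_range N).bddAbove
  exact ⟨T, fun n hn => by_contra fun h => hN _ h n ((hT ⟨_, rfl⟩).trans hn) rfl⟩

theorem exists_bound_visit_infOften [Finite S] (x : ℕ → S) (n₀ : ℕ) :
    ∃ N, ∀ s, InfOften x s → ∃ t, n₀ ≤ t ∧ t ≤ N ∧ x t = s := by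
  have hvisit : ∀ s, ∃ t, InfOften x s → n₀ ≤ t ∧ x t = s := fun s => by
    by_cases hs : InfOften x s
    · obtain ⟨t, ht⟩ := hs n₀
      exact ⟨t, fun _ => ht⟩
    · exact ⟨0, fun h => (hs h).elim⟩
  choose t ht using hvisit
  obtain ⟨N, hN⟩ := (Set.finite_range t).bddAbove
  exact ⟨N, fun s hs => ⟨t s, (ht s hs).1, hN ⟨s, rfl⟩, (ht s hs).2⟩⟩

theorem parityCond_of_cycles {Q : Type*} [Finite S] [Finite Q] (x : ℕ → S) (ρ : ℕ → Q)
    (p : Q → ℕ)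
    (h : ∀ i k, 0 < k → x i = x (i + k) → ∃ l ∈ range (k + 1), Even (p (ρ (i + l))) ∧
      ∀ l' ∈ range (k + 1), p (ρ (i + l)) ≤ p (ρ (i + l'))) :
    ParityCond p ρ := by
  obtain ⟨T, hT⟩ := exists_forall_ge_infOften ρ
  obtain ⟨s, hs⟩ := exists_infOften x
  obtain ⟨i, hTi, hi⟩ := hs T
  obtain ⟨N, hN⟩ := exists_bound_visit_infOften ρ i
  obtain ⟨j, hNj, hj⟩ := hs (max N i + 1)
  obtain ⟨l, hl, heven, hmin⟩ :=
    h i (j - i) (by omega) (by rw [Nat.add_sub_cancel' (by omega), hi, hj])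
  refine ⟨ρ (i + l), hT _ (by omega), heven, fun q hq => ?_⟩
  obtain ⟨t, hit, htN, rfl⟩ := hN q hq
  simpa [Nat.add_sub_cancel' hit] using hmin (t - i) (mem_range.2 (by omega))

end Recurrence

section Strategy

variable {M : Type*} {Q1 : Set Q} {E : Q → Q → Prop} {αu : M → Q → M} {αn : M → Q → Q}
  {m₀ : M} {q₀ : Q} {ρ : ℕ → Q}

/-- The run of an outcome in the product graph `G_σ`. -/
def prodRun (αu : M → Q → M) (m₀ : M) (ρ : ℕ → Q) (i : ℕ) : M × Q :=
  (MemRun αu m₀ ρ i, ρ i)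

theorem EProd.edge (hvalid : ∀ mem s, s ∈ Q1 → E s (αn mem s)) {x y : M × Q}
    (h : EProd Q1 E αu αn x y) : E x.2 y.2 := by
  rcases h.2 with ⟨hx, hy⟩ | ⟨-, hxy⟩
  · exact hy ▸ hvalid _ _ hx
  · exact hxy

theorem TransOutcome.eProd_prodRun (h : TransOutcome Q1 E αu αn m₀ q₀ ρ) (i : ℕ) :
    EProd Q1 E αu αn (prodRun αu m₀ ρ i) (prodRun αu m₀ ρ (i + 1)) := by
  refine ⟨rfl, ?_⟩
  by_cases hq : ρ i ∈ Q1
  · exact Or.inl ⟨hq, h.2.2 i hq⟩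
  · exact Or.inr ⟨hq, h.2.1 i⟩

theorem TransOutcome.reflTransGen_prodRun (h : TransOutcome Q1 E αu αn m₀ q₀ ρ) (i : ℕ) :
    ReflTransGen (EProd Q1 E αu αn) (m₀, q₀) (prodRun αu m₀ ρ i) := by
  refine reflTransGen_of_path (n := i) ?_ (fun j _ => h.eProd_prodRun j) i le_rfl
  rw [prodRun, h.1]
  rfl

end Strategy

theorem stmt15_general {Q : Type*} [Fintype Q] (Q1 : Set Q) (E : Q → Q → Prop)
    (p : Q → ℕ)
    (wplus : Q → Q → ℤ)
    (M : Type*) [Fintype M] (m : ℕ) (hm : Fintype.card M = m)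
    (m₀ : M) (αu : M → Q → M) (αn : M → Q → Q)
    (hvalid : ∀ mem s, s ∈ Q1 → E s (αn mem s))
    (q₀ : Q)
    (Wplus : ℕ) (hWp : ∀ q q', E q q' → |wplus q q'| ≤ (Wplus : ℤ))
    (hcyc : ∀ (k : ℕ) (c : ℕ → M × Q), 0 < k → c 0 = c k →
      (∀ j < k, EProd Q1 E αu αn (c j) (c (j + 1))) →
      (∀ j ≤ k, Relation.ReflTransGen (EProd Q1 E αu αn) (m₀, q₀) (c j)) →
      (0 ≤ ∑ j ∈ Finset.range k, wplus (c j).2 (c (j + 1)).2 ∧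
        ∃ j ∈ Finset.range (k + 1), Even (p (c j).2) ∧
          ∀ l ∈ Finset.range (k + 1), p (c j).2 ≤ p (c l).2)) :
    ∀ ρ, TransOutcome Q1 E αu αn m₀ q₀ ρ →
      ParityCond p ρ ∧ EnergyCond wplus (m * Fintype.card Q * Wplus) ρ := by
  intro ρ hρ
  have hstep := hρ.eProd_prodRun
  have hreach := hρ.reflTransGen_prodRun
  constructor
  · exact parityCond_of_cycles (prodRun αu m₀ ρ) ρ p fun i k hk hik =>
      (hcyc k (fun l => prodRun αu m₀ ρ (i + l)) hk hik (fun j _ => hstep (i + j))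
        (fun j _ => hreach (i + j))).2
  · intro n
    have henergy := neg_card_mul_le_sum_of_cycles_nonneg_s15 (fun x y => wplus x.2 y.2) Wplus
      (m₀, q₀) (fun x y hxy => hWp _ _ (hxy.edge hvalid))
      (fun k c hk h0 hc hr => (hcyc k c hk h0 hc hr).1) n (prodRun αu m₀ ρ) (hreach 0)
      (fun j _ => hstep j)
    rw [Fintype.card_prod, hm] at henergy
    simp only [prodRun] at henergy
    unfold EL
    push_cast at henergy ⊢
    linarith

/-- with `w⁺(e) = (|Q|+1)·w(e) + 1`, if `σ` is a finite-memory strategy of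
size `m` such that every cycle of the product graph `G_σ` reachable from `⟨m₀,q₀⟩` has
even minimal priority and nonnegative sum of `w⁺`-weights, then `σ` is winning from `q₀`
in the energy parity game `⟨G,p,w⁺⟩` with initial credit `N·W⁺` where `N = m·|Q|` and
`W⁺` is the largest absolute value of a `w⁺`-weight. -/
theorem stmt15 {Q : Type*} [Fintype Q] (Q1 : Set Q) (E : Q → Q → Prop)
    (hE : ∀ q, ∃ q', E q q') (p : Q → ℕ) (w : Q → Q → ℤ)
    (wplus : Q → Q → ℤ)
    (hwp : ∀ q q', wplus q q' = ((Fintype.card Q : ℤ) + 1) * w q q' + 1)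
    (M : Type*) [Fintype M] (m : ℕ) (hm : Fintype.card M = m)
    (m₀ : M) (αu : M → Q → M) (αn : M → Q → Q)
    (hvalid : ∀ mem s, s ∈ Q1 → E s (αn mem s))
    (q₀ : Q)
    (Wplus : ℕ) (hWp : ∀ q q', E q q' → |wplus q q'| ≤ (Wplus : ℤ))
    (hcyc : ∀ (k : ℕ) (c : ℕ → M × Q), 0 < k → c 0 = c k →
      (∀ j < k, EProd Q1 E αu αn (c j) (c (j + 1))) →
      (∀ j ≤ k, Relation.ReflTransGen (EProd Q1 E αu αn) (m₀, q₀) (c j)) →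
      (0 ≤ ∑ j ∈ Finset.range k, wplus (c j).2 (c (j + 1)).2 ∧
        ∃ j ∈ Finset.range (k + 1), Even (p (c j).2) ∧
          ∀ l ∈ Finset.range (k + 1), p (c j).2 ≤ p (c l).2)) :
    ∀ ρ, TransOutcome Q1 E αu αn m₀ q₀ ρ →
      ParityCond p ρ ∧ EnergyCond wplus (m * Fintype.card Q * Wplus) ρ :=
  stmt15_general Q1 E p wplus M m hm m₀ αu αn hvalid q₀ Wplus hWp hcyc
end
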